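/- Let (V, ω) be a finite-dimensional symplectic vector space and C ⊆ V a linear subspace. Then the tangent prolongation C ⊕ C ⊆ V ⊕ V, with the symplectic-type structure on V ⊕ V given by ω̃((v₁,w₁),(v₂,w₂)) = ω(v₁,w₂) + ω(w₁,v₂), is coisotropic in (V ⊕ V, ω̃) if and only if C is coisotropic in (V, ω). -/
import Mathlib


/-- A subspace `C` of a vector space with a bilinear form `ω` is coisotropic if every
vector `ω`-orthogonal to all of `C` lies in `C`. -/
def IsCoisotropic {V : Type*} [AddCommGroup V] [Module ℝ V]
    (ω : V →ₗ[ℝ] V →ₗ[ℝ] ℝ) (C : Submodule ℝ V) : Prop :=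
  ∀ v : V, (∀ c ∈ C, ω v c = 0) → v ∈ C

/-- Let `(V, ω)` be a finite-dimensional symplectic vector space and `C ⊆ V` a subspace.
The tangent prolongation `C ⊕ C ⊆ V ⊕ V`, with the tangent lift
`ω̃((v₁,w₁),(v₂,w₂)) = ω(v₁,w₂) + ω(w₁,v₂)`, is coisotropic in `(V ⊕ V, ω̃)` if and only
if `C` is coisotropic in `(V, ω)`. -/
theorem tangent_coisotropic_iff {V : Type*} [AddCommGroup V] [Module ℝ V]
    [FiniteDimensional ℝ V]
    (ω : V →ₗ[ℝ] V →ₗ[ℝ] ℝ)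
    (hskew : ∀ v w : V, ω v w = -ω w v)
    (hnondeg : ∀ v : V, (∀ w : V, ω v w = 0) → v = 0)
    (C : Submodule ℝ V)
    (ωt : V × V →ₗ[ℝ] V × V →ₗ[ℝ] ℝ)
    (hωt : ∀ p q : V × V, ωt p q = ω p.1 q.2 + ω p.2 q.1) :
    IsCoisotropic ωt (C.prod C) ↔ IsCoisotropic ω C := by
  constructor
  · intro h v hv
    have : (v, v) ∈ C.prod C := by
      apply h
      intro c hc
      rw [hωt]
      simp only [Submodule.mem_prod] at hc
      rw [hv c.1 hc.1, hv c.2 hc.2]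
      ring
    exact this.1
  · intro h p hp
    have hv1 : p.1 ∈ C := by
      apply h
      intro c hc
      have := hp (0, c) (by simp [Submodule.mem_prod, hc])
      rw [hωt] at this
      simpa using this
    have hv2 : p.2 ∈ C := by
      apply h
      intro c hc
      have := hp (c, 0) (by simp [Submodule.mem_prod, hc])
      rw [hωt] at this
      simpa using this
    exact Submodule.mem_prod.2 ⟨hv1, hv2⟩
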